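/- If G is a prime bipartite graph, then G*v \ v is prime for every vertex v of G. -/

import Mathlib

variable {V : Type*}

/-- A split of a simple graph. -/
def IsSplit (G : SimpleGraph V) (A B : Set V) : Prop :=
  A ∪ B = Set.univ ∧ Disjoint A B ∧ 2 ≤ A.ncard ∧ 2 ≤ B.ncard ∧
    ∃ A' B', A' ⊆ A ∧ B' ⊆ B ∧ ∀ x ∈ A, ∀ y ∈ B, (G.Adj x y ↔ (x ∈ A' ∧ y ∈ B'))

/-- A graph is prime if it has no split. -/
def IsPrime (G : SimpleGraph V) : Prop := ¬ ∃ A B : Set V, IsSplit G A B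

/-- Local complementation at a vertex. -/
def localComp (G : SimpleGraph V) (v : V) : SimpleGraph V where
  Adj x y := x ≠ y ∧ Xor' (G.Adj x y) (G.Adj v x ∧ G.Adj v y)
  symm := by
    constructor
    intro x y h
    refine ⟨h.1.symm, ?_⟩
    rw [SimpleGraph.adj_comm, and_comm]
    exact h.2
  loopless := by constructor; intro x h; exact h.1 rfl

/-- Pivoting an edge: G ∧ vw = G*v*w*v. -/
def pivot (G : SimpleGraph V) (v w : V) : SimpleGraph V :=
  localComp (localComp (localComp G v) w) v

/-- Vertex deletion. -/
def deleteVert (G : SimpleGraph V) (v : V) : SimpleGraph {x : V // x ≠ v} :=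
  G.induce {x | x ≠ v}

/-- Two vertices are twins if every other vertex is adjacent to one iff to the other. -/
def Twins (G : SimpleGraph V) (u w : V) : Prop :=
  ∀ x, x ≠ u → x ≠ w → (G.Adj x u ↔ G.Adj x w)

/-! Since `G` has no triangles, `N(v)` is independent, so across a split `(A, B)` of `G*v \ v`
with frontiers `A'`, `B'` the graph `G` is the split pattern toggled on `N(v) × N(v)`. If `v` has
no neighbour in `B`, then `(A + v, B)` is a split of `G` with the same frontiers; symmetrically
for `A`. Otherwise `N(v)` meets both sides and lies in `A' ∪ B'`. If `A' ⊆ N(v)`, then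
`(A, B + v)` is a split of `G` with frontiers `A'` and `(B' \ N(v)) + v`; symmetrically if
`B' ⊆ N(v)`. In the remaining case `a₀ ∈ A' \ N(v)`, `b₀ ∈ B' \ N(v)` and neighbours
`a₁ ∈ A`, `b₁ ∈ B` of `v` span the 5-cycle `v a₁ b₀ a₀ b₁`, impossible in a bipartite graph. -/

open SimpleGraph

section Basic

variable {G : SimpleGraph V}

@[simp]
lemma localComp_adj {v x y : V} :
    (localComp G v).Adj x y ↔ x ≠ y ∧ Xor (G.Adj x y) (G.Adj v x ∧ G.Adj v y) :=
  Iff.rfl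

@[simp]
lemma deleteVert_adj {v : V} {x y : {x // x ≠ v}} : (deleteVert G v).Adj x y ↔ G.Adj x y :=
  Iff.rfl

lemma adj_iff_xor_localComp_adj {v x y : V} (hxy : x ≠ y) :
    G.Adj x y ↔ Xor ((localComp G v).Adj x y) (G.Adj v x ∧ G.Adj v y) := by
  rw [localComp_adj, and_iff_right hxy]
  grind

lemma IsSplit.symm {A B : Set V} (h : IsSplit G A B) : IsSplit G B A := by
  obtain ⟨hcov, hdisj, hA, hB, A', B', hA', hB', hadj⟩ := h
  refine ⟨Set.union_comm A B ▸ hcov, hdisj.symm, hB, hA, B', A', hB', hA', fun y hy x hx => ?_⟩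
  rw [G.adj_comm, hadj x hx y hy, and_comm]

lemma SimpleGraph.Colorable.not_pentagon (hG : G.Colorable 2) {x₀ x₁ x₂ x₃ x₄ : V}
    (h₀₁ : G.Adj x₀ x₁) (h₁₂ : G.Adj x₁ x₂) (h₂₃ : G.Adj x₂ x₃) (h₃₄ : G.Adj x₃ x₄)
    (h₄₀ : G.Adj x₄ x₀) : False := by
  have := two_colorable_iff_forall_loop_even.mp hG x₀
    (.cons h₀₁ (.cons h₁₂ (.cons h₂₃ (.cons h₃₄ (.cons h₄₀ .nil)))))
  simp only [Walk.length_cons, Walk.length_nil] at this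
  exact absurd this (by decide)

end Basic

lemma isSplit_insert_image {G : SimpleGraph V} {v : V} {H : SimpleGraph {x // x ≠ v}}
    {P Q : Set {x // x ≠ v}} (hs : IsSplit H P Q) (P' Q' : Set {x // x ≠ v}) (hP' : P' ⊆ P)
    (hQ' : Q' ⊆ Q) (hadj : ∀ a ∈ P, ∀ b ∈ Q, G.Adj a b ↔ a ∈ P' ∧ b ∈ Q')
    (hv : (∀ b ∈ Q, ¬ G.Adj v b) ∨ ∀ b ∈ Q, G.Adj v b ↔ b ∈ Q') :
    IsSplit G (insert v (Subtype.val '' P)) (Subtype.val '' Q) := by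
  obtain ⟨hcov, hdisj, hP, hQ, -⟩ := hs
  have hv_notMem : ∀ S : Set {x // x ≠ v}, v ∉ Subtype.val '' S := fun _ ⟨y, _, hy⟩ => y.2 hy
  have hmem : ∀ (S : Set {x // x ≠ v}) (a : {x // x ≠ v}), (a : V) ∈ Subtype.val '' S ↔ a ∈ S :=
    fun _ _ => Subtype.val_injective.mem_set_image
  have hPfin : (Subtype.val '' P).Finite := (Set.finite_of_ncard_pos (by omega)).image _
  refine ⟨?_, ?_, ?_, ?_, ?_⟩
  · refine Set.eq_univ_of_forall fun u => ?_
    by_cases hu : u = v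
    · exact Or.inl (Or.inl hu)
    · rcases (hcov ▸ Set.mem_univ (⟨u, hu⟩ : {x // x ≠ v})) with h | h
      · exact Or.inl (Or.inr ⟨_, h, rfl⟩)
      · exact Or.inr ⟨_, h, rfl⟩
  · exact Set.disjoint_insert_left.mpr
      ⟨hv_notMem Q, (Set.disjoint_image_iff Subtype.val_injective).mpr hdisj⟩
  · calc 2 ≤ P.ncard := hP
      _ = (Subtype.val '' P).ncard := (Set.ncard_image_of_injective _ Subtype.val_injective).symm
      _ ≤ _ := Set.ncard_le_ncard (Set.subset_insert _ _) (hPfin.insert v)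
  · rwa [Set.ncard_image_of_injective _ Subtype.val_injective]
  rcases hv with hv | hv
  · refine ⟨Subtype.val '' P', Subtype.val '' Q', (Set.image_mono hP').trans
      (Set.subset_insert _ _), Set.image_mono hQ', ?_⟩
    rintro x (rfl | ⟨a, ha, rfl⟩) y ⟨b, hb, rfl⟩
    · simp only [hv b hb, hv_notMem, false_and]
    · rw [hmem, hmem, hadj a ha b hb]
  · refine ⟨insert v (Subtype.val '' P'), Subtype.val '' Q', Set.insert_subset_insert
      (Set.image_mono hP'), Set.image_mono hQ', ?_⟩
    rintro x (rfl | ⟨a, ha, rfl⟩) y ⟨b, hb, rfl⟩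
    · simp only [hv b hb, hmem, Set.mem_insert_iff, true_or, true_and]
    · rw [Set.mem_insert_iff, hmem, hmem, hadj a ha b hb, or_iff_right a.2]

section SplitOfLocalComp

variable {G : SimpleGraph V} {v : V} {A B A' B' : Set {x // x ≠ v}}
  (hfront : ∀ a ∈ A, ∀ b ∈ B, (deleteVert (localComp G v) v).Adj a b ↔ a ∈ A' ∧ b ∈ B')
include hfront

lemma adj_iff_xor_of_frontier (hdisj : Disjoint A B) {a b : {x // x ≠ v}} (ha : a ∈ A)
    (hb : b ∈ B) : G.Adj a b ↔ Xor (a ∈ A' ∧ b ∈ B') (G.Adj v a ∧ G.Adj v b) := by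
  have hab : (a : V) ≠ b := fun h => Set.disjoint_left.mp hdisj ha (Subtype.val_injective h ▸ hb)
  rw [adj_iff_xor_localComp_adj hab, ← hfront a ha b hb, deleteVert_adj]

lemma mem_frontier_of_adj (hG : G.CliqueFree 3) (hdisj : Disjoint A B) {a b : {x // x ≠ v}}
    (ha : a ∈ A) (hb : b ∈ B) (hva : G.Adj v a) (hvb : G.Adj v b) : a ∈ A' ∧ b ∈ B' := by
  have hab : ¬ G.Adj a b := fun h => isIndepSet_neighborSet_of_triangleFree G hG v hva hvb h.ne h
  rw [adj_iff_xor_of_frontier hfront hdisj ha hb] at hab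
  grind

variable {H : SimpleGraph {x // x ≠ v}} (hs : IsSplit H A B) (hA' : A' ⊆ A) (hB' : B' ⊆ B)
include hs hA' hB'

lemma isSplit_insert_left_of_forall_not_adj (hN : ∀ b ∈ B, ¬ G.Adj v b) :
    IsSplit G (insert v (Subtype.val '' A)) (Subtype.val '' B) := by
  refine isSplit_insert_image hs A' B' hA' hB' (fun a ha b hb => ?_) (Or.inl hN)
  rw [adj_iff_xor_of_frontier hfront hs.2.1 ha hb]
  grind

lemma isSplit_insert_right_of_frontier_subset_neighborSet
    (hNA : ∀ a ∈ A, G.Adj v a → a ∈ A') (hNB : ∀ b ∈ B, G.Adj v b → b ∈ B')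
    (hA'N : ∀ a ∈ A', G.Adj v a) :
    IsSplit G (Subtype.val '' A) (insert v (Subtype.val '' B)) := by
  refine (isSplit_insert_image hs.symm {b ∈ B' | ¬ G.Adj v b} A' (fun b hb => hB' hb.1) hA'
    (fun b hb a ha => ?_) (Or.inr fun a ha => ⟨hNA a ha, hA'N a⟩)).symm
  rw [G.adj_comm, adj_iff_xor_of_frontier hfront hs.2.1 ha hb]
  have := hNA a ha
  have := hNB b hb
  have := hA'N a
  grind

lemma frontier_subset_neighborSet_or (hG : G.Colorable 2) {a₁ b₁ : {x // x ≠ v}} (ha₁ : a₁ ∈ A)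
    (hb₁ : b₁ ∈ B) (hva₁ : G.Adj v a₁) (hvb₁ : G.Adj v b₁) :
    (∀ a ∈ A', G.Adj v a) ∨ ∀ b ∈ B', G.Adj v b := by
  by_contra! ⟨⟨a₀, ha₀, hva₀⟩, b₀, hb₀, hvb₀⟩
  obtain ⟨ha₁', hb₁'⟩ :=
    mem_frontier_of_adj hfront (hG.cliqueFree (by norm_num)) hs.2.1 ha₁ hb₁ hva₁ hvb₁
  have hadj : ∀ a ∈ A', ∀ b ∈ B', ¬ (G.Adj v a ∧ G.Adj v b) → G.Adj a b := fun a ha b hb h => by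
    rw [adj_iff_xor_of_frontier hfront hs.2.1 (hA' ha) (hB' hb)]
    grind
  exact hG.not_pentagon hva₁ (hadj a₁ ha₁' b₀ hb₀ (by tauto)) (hadj a₀ ha₀ b₀ hb₀ (by tauto)).symm
    (hadj a₀ ha₀ b₁ hb₁' (by tauto)) hvb₁.symm

end SplitOfLocalComp

theorem prime_localComp_delete_of_bipartite_general {V : Type*} (G : SimpleGraph V)
    (hbip : G.Colorable 2) (hprime : IsPrime G) (v : V) :
    IsPrime (deleteVert (localComp G v) v) := by
  rintro ⟨A, B, hs⟩
  obtain ⟨-, hdisj, -, -, A', B', hA', hB', hfront⟩ := id hs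
  have hfront' : ∀ b ∈ B, ∀ a ∈ A, (deleteVert (localComp G v) v).Adj b a ↔ b ∈ B' ∧ a ∈ A' :=
    fun b hb a ha => by rw [adj_comm, hfront a ha b hb, and_comm]
  by_cases hNB : ∀ b ∈ B, ¬ G.Adj v b
  · exact hprime ⟨_, _, isSplit_insert_left_of_forall_not_adj hfront hs hA' hB' hNB⟩
  by_cases hNA : ∀ a ∈ A, ¬ G.Adj v a
  · exact hprime ⟨_, _, (isSplit_insert_left_of_forall_not_adj hfront' hs.symm hB' hA' hNA).symm⟩
  push Not at hNA hNB
  obtain ⟨a₁, ha₁, hva₁⟩ := hNA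
  obtain ⟨b₁, hb₁, hvb₁⟩ := hNB
  have htri : G.CliqueFree 3 := hbip.cliqueFree (by norm_num)
  have hNA' : ∀ a ∈ A, G.Adj v a → a ∈ A' :=
    fun a ha hva => (mem_frontier_of_adj hfront htri hdisj ha hb₁ hva hvb₁).1
  have hNB' : ∀ b ∈ B, G.Adj v b → b ∈ B' :=
    fun b hb hvb => (mem_frontier_of_adj hfront htri hdisj ha₁ hb hva₁ hvb).2
  rcases frontier_subset_neighborSet_or hfront hs hA' hB' hbip ha₁ hb₁ hva₁ hvb₁ with hA'N | hB'N
  · exact hprime ⟨_, _,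
      isSplit_insert_right_of_frontier_subset_neighborSet hfront hs hA' hB' hNA' hNB' hA'N⟩
  · exact hprime ⟨_, _, (isSplit_insert_right_of_frontier_subset_neighborSet hfront' hs.symm
      hB' hA' hNB' hNA' hB'N).symm⟩

/-- If G is a prime bipartite graph, then G*v ∖ v is prime for every vertex v. -/
theorem prime_localComp_delete_of_bipartite {V : Type*} [Finite V] (G : SimpleGraph V)
    (hbip : G.Colorable 2) (hprime : IsPrime G) (v : V) :
    IsPrime (deleteVert (localComp G v) v) :=
  prime_localComp_delete_of_bipartite_general G hbip hprime v
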